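/- arXiv:1503.06916 — 4 statements merged into one kernel-verified Lean document; each statement's English description precedes it below -/
import Mathlib

section
/- Let D₁ and D₂ be closed symmetric densely defined operators on a Hilbert space H such that Dom D₁ ∩ Dom D₂ is dense. Define D := (1/2)(D₁+D₂) + (i/2)(D₁−D₂) on Dom D₁ ∩ Dom D₂. Then D is closable: its adjoint D* is densely defined, and in fact Dom D* contains Dom D₁ ∩ Dom D₂, with D*ψ = (1/2)(D₁+D₂)ψ − (i/2)(D₁−D₂)ψ for all ψ ∈ Dom D₁ ∩ Dom D₂. -/
/-!
On the common domain, `D = ((1 + i)/2) D₁ + ((1 - i)/2) D₂`. Since `D₁` and `D₂` are symmetric,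
the conjugate combination `((1 - i)/2) D₁ + ((1 + i)/2) D₂` is a formal adjoint of `D`, hence a
restriction of `D*`; its domain `Dom D₁ ∩ Dom D₂` is dense, so `Dom D*` is dense too.
-/

open scoped ComplexConjugate

namespace LinearPMap

variable {𝕜 E F : Type*} [RCLike 𝕜]
  [NormedAddCommGroup E] [InnerProductSpace 𝕜 E] [NormedAddCommGroup F] [InnerProductSpace 𝕜 F]

theorem IsFormalAdjoint.add {T₁ T₂ : E →ₗ.[𝕜] F} {S₁ S₂ : F →ₗ.[𝕜] E}
    (h₁ : T₁.IsFormalAdjoint S₁) (h₂ : T₂.IsFormalAdjoint S₂) :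
    (T₁ + T₂).IsFormalAdjoint (S₁ + S₂) := fun x y => by
  simp only [add_apply, inner_add_left, inner_add_right]
  exact congrArg₂ (· + ·) (h₁ ⟨x, x.2.1⟩ ⟨y, y.2.1⟩) (h₂ ⟨x, x.2.2⟩ ⟨y, y.2.2⟩)

theorem IsFormalAdjoint.smul {T : E →ₗ.[𝕜] F} {S : F →ₗ.[𝕜] E} (h : T.IsFormalAdjoint S)
    (a : 𝕜) : (a • T).IsFormalAdjoint (conj a • S) := fun x y => by
  simp only [LinearPMap.smul_apply, inner_smul_left, inner_smul_right]
  exact congrArg (conj a * ·) (h x y)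

theorem smul_add_smul_le_adjoint [CompleteSpace E] {T₁ T₂ : E →ₗ.[𝕜] E}
    (h₁ : T₁.IsFormalAdjoint T₁) (h₂ : T₂.IsFormalAdjoint T₂)
    (hT : Dense ((T₁.domain ⊓ T₂.domain : Submodule 𝕜 E) : Set E))
    (a b : 𝕜) : conj a • T₁ + conj b • T₂ ≤ (a • T₁ + b • T₂)† :=
  ((h₁.smul a).add (h₂.smul b)).le_adjoint hT

end LinearPMap

theorem stmt_5_general {H : Type*} [NormedAddCommGroup H] [InnerProductSpace ℂ H] [CompleteSpace H]
    (D₁ D₂ D : H →ₗ.[ℂ] H)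
    (h₁sym : ∀ x y : D₁.domain, (inner ℂ (D₁ x) (y : H) : ℂ) = inner ℂ (x : H) (D₁ y))
    (h₂sym : ∀ x y : D₂.domain, (inner ℂ (D₂ x) (y : H) : ℂ) = inner ℂ (x : H) (D₂ y))
    (hdense : Dense ((D₁.domain ⊓ D₂.domain : Submodule ℂ H) : Set H))
    (hDdom : D.domain = D₁.domain ⊓ D₂.domain)
    (hDval : ∀ (x : H) (h1 : x ∈ D₁.domain) (h2 : x ∈ D₂.domain) (h : x ∈ D.domain),
      D ⟨x, h⟩ = ((1 : ℂ) / 2) • (D₁ ⟨x, h1⟩ + D₂ ⟨x, h2⟩)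
        + (Complex.I / 2) • (D₁ ⟨x, h1⟩ - D₂ ⟨x, h2⟩)) :
    Dense (D.adjoint.domain : Set H)
      ∧ ∀ (ψ : H) (h1 : ψ ∈ D₁.domain) (h2 : ψ ∈ D₂.domain),
          ∃ h : ψ ∈ D.adjoint.domain,
            D.adjoint ⟨ψ, h⟩ = ((1 : ℂ) / 2) • (D₁ ⟨ψ, h1⟩ + D₂ ⟨ψ, h2⟩)
              - (Complex.I / 2) • (D₁ ⟨ψ, h1⟩ - D₂ ⟨ψ, h2⟩) := by
  have hD : D = ((1 + Complex.I) / 2) • D₁ + ((1 - Complex.I) / 2) • D₂ := by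
    refine LinearPMap.ext hDdom fun x hx _ => ?_
    rw [hDval x (hDdom ▸ hx).1 (hDdom ▸ hx).2 hx, LinearPMap.add_apply]
    simp only [LinearPMap.smul_apply]
    module
  have hle := LinearPMap.smul_add_smul_le_adjoint h₁sym h₂sym hdense
    ((1 + Complex.I) / 2) ((1 - Complex.I) / 2)
  rw [← hD] at hle
  refine ⟨hdense.mono hle.1, fun ψ h1 h2 => ⟨hle.1 ⟨h1, h2⟩, ?_⟩⟩
  rw [← hle.2 (x := ⟨ψ, h1, h2⟩) rfl, LinearPMap.add_apply]
  simp only [LinearPMap.smul_apply, map_div₀, map_add, map_sub, map_one, map_ofNat,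
    Complex.conj_I, sub_neg_eq_add]
  module

/-- The reverse Wick rotation `D = (1/2)(D₁+D₂) + (i/2)(D₁−D₂)` of a pair of closed
symmetric densely defined operators is closable: its adjoint is densely defined, and in fact
`Dom D*` contains `Dom D₁ ∩ Dom D₂`, with `D*ψ = (1/2)(D₁+D₂)ψ − (i/2)(D₁−D₂)ψ` there. -/
theorem stmt_5 {H : Type*} [NormedAddCommGroup H] [InnerProductSpace ℂ H] [CompleteSpace H]
    (D₁ D₂ D : H →ₗ.[ℂ] H) (h₁c : D₁.IsClosed) (h₂c : D₂.IsClosed)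
    (h₁dense : Dense (D₁.domain : Set H)) (h₂dense : Dense (D₂.domain : Set H))
    (h₁sym : ∀ x y : D₁.domain, (inner ℂ (D₁ x) (y : H) : ℂ) = inner ℂ (x : H) (D₁ y))
    (h₂sym : ∀ x y : D₂.domain, (inner ℂ (D₂ x) (y : H) : ℂ) = inner ℂ (x : H) (D₂ y))
    (hdense : Dense ((D₁.domain ⊓ D₂.domain : Submodule ℂ H) : Set H))
    (hDdom : D.domain = D₁.domain ⊓ D₂.domain)
    (hDval : ∀ (x : H) (h1 : x ∈ D₁.domain) (h2 : x ∈ D₂.domain) (h : x ∈ D.domain),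
      D ⟨x, h⟩ = ((1 : ℂ) / 2) • (D₁ ⟨x, h1⟩ + D₂ ⟨x, h2⟩)
        + (Complex.I / 2) • (D₁ ⟨x, h1⟩ - D₂ ⟨x, h2⟩)) :
    Dense (D.adjoint.domain : Set H)
      ∧ ∀ (ψ : H) (h1 : ψ ∈ D₁.domain) (h2 : ψ ∈ D₂.domain),
          ∃ h : ψ ∈ D.adjoint.domain,
            D.adjoint ⟨ψ, h⟩ = ((1 : ℂ) / 2) • (D₁ ⟨ψ, h1⟩ + D₂ ⟨ψ, h2⟩)
              - (Complex.I / 2) • (D₁ ⟨ψ, h1⟩ - D₂ ⟨ψ, h2⟩) :=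
  stmt_5_general D₁ D₂ D h₁sym h₂sym hdense hDdom hDval
end

section
/- Let S and T be self-adjoint operators on a Hilbert space H such that for every ξ in a dense subspace E and every nonzero real μ, (S−iμ)⁻¹ξ ∈ Dom S ∩ Dom T. Then S is essentially self-adjoint on Dom S ∩ Dom T. -/
/-!
The resolvent `R = (S - i)⁻¹` is a bounded bijection of `H` onto `Dom S`, so
`z ↦ (R z, z + i R z)` is a continuous surjection of `H` onto the graph of `S`. It maps the
dense subspace `E` into the graph of `S` restricted to `Dom S ∩ Dom T`, hence that graph is
dense in the graph of `S`; as `S` is self-adjoint, hence closed, its closure is `S`.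
-/

namespace LinearPMap

theorem IsClosed.closure_eq_of_graph_le_topologicalClosure {𝕜 E F : Type*} [CommRing 𝕜]
    [TopologicalSpace 𝕜] [AddCommGroup E] [AddCommGroup F] [Module 𝕜 E] [Module 𝕜 F]
    [TopologicalSpace E] [TopologicalSpace F] [ContinuousAdd E] [ContinuousAdd F]
    [ContinuousSMul 𝕜 E] [ContinuousSMul 𝕜 F] {S A : E →ₗ.[𝕜] F} (hS : S.IsClosed)
    (hAS : A ≤ S) (hgraph : S.graph ≤ A.graph.topologicalClosure) : A.closure = S := by
  have hA : A.IsClosable := hS.isClosable.leIsClosable hAS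
  refine eq_of_eq_graph ?_
  rw [← hA.graph_closure_eq_closure_graph]
  exact le_antisymm (Submodule.topologicalClosure_minimal _ (le_graph_of_le hAS) hS) hgraph

variable {𝕜 H : Type*} [Ring 𝕜] [AddCommGroup H] [Module 𝕜 H] [TopologicalSpace H]
  [ContinuousAdd H] [ContinuousConstSMul 𝕜 H]

theorem graph_le_topologicalClosure_domRestrict_of_resolvent {S : H →ₗ.[𝕜] H} {c : 𝕜}
    {R : H →L[𝕜] H} (hR_right : ∀ x, ∃ h : R x ∈ S.domain, S ⟨R x, h⟩ - c • R x = x)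
    (hR_left : ∀ y : S.domain, R (S y - c • (y : H)) = y) {E : Set H} (hE : Dense E)
    {D : Submodule 𝕜 H} (hRD : ∀ ξ ∈ E, R ξ ∈ D) :
    S.graph ≤ (S.domRestrict D).graph.topologicalClosure := by
  set f : H → H × H := fun z => (R z, z + c • R z)
  have hf : Continuous f := R.continuous.prodMk (continuous_id.add (R.continuous.const_smul c))
  have hfE : f '' E ⊆ (S.domRestrict D).graph := by
    rintro - ⟨ξ, hξ, rfl⟩
    obtain ⟨hS, hSξ⟩ := hR_right ξ
    refine (S.domRestrict D).mem_graph_iff.mpr ⟨⟨R ξ, ⟨hRD ξ hξ, hS⟩⟩, rfl, ?_⟩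
    exact (domRestrict_apply (y := ⟨R ξ, hS⟩) rfl).trans (eq_add_of_sub_eq hSξ)
  intro p hp
  obtain ⟨y, hy₁, hy₂⟩ := S.mem_graph_iff.mp hp
  have hfy : f (S y - c • (y : H)) = p := by
    simp only [f, hR_left, sub_add_cancel]
    exact Prod.ext hy₁ hy₂
  rw [← SetLike.mem_coe, Submodule.topologicalClosure_coe, ← hfy]
  exact closure_mono hfE (hf.range_subset_closure_image_dense hE ⟨_, rfl⟩)

end LinearPMap

theorem stmt_7_general {H : Type*} [NormedAddCommGroup H] [InnerProductSpace ℂ H] [CompleteSpace H]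
    (S T : H →ₗ.[ℂ] H) (hS : IsSelfAdjoint S)
    (R : ℝ → H →L[ℂ] H)
    (hres₁ : ∀ μ : ℝ, μ ≠ 0 → ∀ x : H, ∃ h : R μ x ∈ S.domain,
      S ⟨R μ x, h⟩ - (Complex.I * (μ : ℂ)) • R μ x = x)
    (hres₂ : ∀ μ : ℝ, μ ≠ 0 → ∀ (y : H) (hy : y ∈ S.domain),
      R μ (S ⟨y, hy⟩ - (Complex.I * (μ : ℂ)) • y) = y)
    (E : Submodule ℂ H) (hE : Dense (E : Set H))
    (hmap : ∀ μ : ℝ, μ ≠ 0 → ∀ ξ ∈ E, R μ ξ ∈ S.domain ⊓ T.domain) :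
    (S.domRestrict (S.domain ⊓ T.domain)).closure = S :=
  LinearPMap.IsClosed.closure_eq_of_graph_le_topologicalClosure hS.isClosed
    LinearPMap.domRestrict_le <|
    LinearPMap.graph_le_topologicalClosure_domRestrict_of_resolvent (hres₁ 1 one_ne_zero)
      (fun y => hres₂ 1 one_ne_zero y y.2) hE (hmap 1 one_ne_zero)

/-- If `S`, `T` are self-adjoint and the resolvents `(S−iμ)⁻¹` map a dense subspace `E`
into `Dom S ∩ Dom T` for all nonzero real `μ`, then `S` is essentially self-adjoint
on `Dom S ∩ Dom T`, i.e. the closure of its restriction to `Dom S ∩ Dom T` equals `S`. -/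
theorem stmt_7 {H : Type*} [NormedAddCommGroup H] [InnerProductSpace ℂ H] [CompleteSpace H]
    (S T : H →ₗ.[ℂ] H) (hS : IsSelfAdjoint S) (hT : IsSelfAdjoint T)
    (R : ℝ → H →L[ℂ] H)
    (hres₁ : ∀ μ : ℝ, μ ≠ 0 → ∀ x : H, ∃ h : R μ x ∈ S.domain,
      S ⟨R μ x, h⟩ - (Complex.I * (μ : ℂ)) • R μ x = x)
    (hres₂ : ∀ μ : ℝ, μ ≠ 0 → ∀ (y : H) (hy : y ∈ S.domain),
      R μ (S ⟨y, hy⟩ - (Complex.I * (μ : ℂ)) • y) = y)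
    (E : Submodule ℂ H) (hE : Dense (E : Set H))
    (hmap : ∀ μ : ℝ, μ ≠ 0 → ∀ ξ ∈ E, R μ ξ ∈ S.domain ⊓ T.domain) :
    (S.domRestrict (S.domain ⊓ T.domain)).closure = S :=
  stmt_7_general S T hS R hres₁ hres₂ E hE hmap
end

section
/- Let D be a closed densely defined operator on a Hilbert space H, let E ⊆ Dom D ∩ Dom D* be dense with respect to the norm ‖·‖_{D,D*}, and let a be a bounded operator on H such that a and a* map E into Dom D ∩ Dom D*, and such that the commutators [D,a] and [D*,a] are bounded on E. Then a maps all of Dom D ∩ Dom D* into Dom D ∩ Dom D*. -/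
/-!
Approximate `ψ ∈ Dom D ∩ Dom D*` by `φₙ ∈ E` in the graph norm of `(D, D*)`. For `T = D` or
`T = D*`, writing `T (a φₙ) = [T, a] φₙ + a (T φₙ)` shows that `T (a φₙ)` is Cauchy, because
`[T, a]` is bounded on `E`. Since `a φₙ → a ψ` and both `D` and `D*` are closed, `a ψ ∈ Dom T`.
-/

open Filter Topology

theorem tendsto_of_norm_sub_sq_le {ι F : Type*} [SeminormedAddCommGroup F] {l : Filter ι}
    {u : ι → F} {y : F} {e : ι → ℝ} (hu : ∀ i, ‖y - u i‖ ^ 2 ≤ e i)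
    (he : Tendsto e l (𝓝 0)) : Tendsto u l (𝓝 y) := by
  rw [tendsto_iff_norm_sub_tendsto_zero]
  refine squeeze_zero (fun _ => norm_nonneg _) (fun i => ?_) (by simpa using he.sqrt)
  rw [norm_sub_rev, ← abs_norm]
  exact Real.abs_le_sqrt (hu i)

theorem exists_seq_tendsto_of_forall_sq_add_sq_add_sq_lt {X F₁ F₂ F₃ : Type*}
    [SeminormedAddCommGroup F₁] [SeminormedAddCommGroup F₂] [SeminormedAddCommGroup F₃]
    (f₁ : X → F₁) (f₂ : X → F₂) (f₃ : X → F₃) (y₁ : F₁) (y₂ : F₂) (y₃ : F₃)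
    (h : ∀ ε : ℝ, 0 < ε → ∃ x, ‖y₁ - f₁ x‖ ^ 2 + ‖y₂ - f₂ x‖ ^ 2 + ‖y₃ - f₃ x‖ ^ 2 < ε) :
    ∃ x : ℕ → X, Tendsto (fun n => f₁ (x n)) atTop (𝓝 y₁) ∧
      Tendsto (fun n => f₂ (x n)) atTop (𝓝 y₂) ∧ Tendsto (fun n => f₃ (x n)) atTop (𝓝 y₃) := by
  choose x hx using fun n : ℕ => h (1 / (n + 1)) Nat.one_div_pos_of_nat
  have he : Tendsto (fun n : ℕ => 1 / ((n : ℝ) + 1)) atTop (𝓝 0) :=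
    tendsto_one_div_add_atTop_nhds_zero_nat
  refine ⟨x, tendsto_of_norm_sub_sq_le (fun n => ?_) he,
    tendsto_of_norm_sub_sq_le (fun n => ?_) he, tendsto_of_norm_sub_sq_le (fun n => ?_) he⟩ <;>
  nlinarith [hx n, sq_nonneg ‖y₁ - f₁ (x n)‖, sq_nonneg ‖y₂ - f₂ (x n)‖, sq_nonneg ‖y₃ - f₃ (x n)‖]

namespace LinearPMap

theorem IsClosed.mem_domain_of_tendsto {R E F ι : Type*} [CommRing R] [AddCommGroup E]
    [Module R E] [TopologicalSpace E] [AddCommGroup F] [Module R F] [TopologicalSpace F]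
    {T : E →ₗ.[R] F} (hT : T.IsClosed) {l : Filter ι} [l.NeBot] {u : ι → T.domain} {x : E} {y : F}
    (hu : Tendsto (fun i => (u i : E)) l (𝓝 x)) (hTu : Tendsto (fun i => T (u i)) l (𝓝 y)) :
    x ∈ T.domain :=
  mem_domain_of_mem_graph <|
    hT.mem_of_tendsto (hu.prodMk_nhds hTu) (Eventually.of_forall fun i => T.mem_graph (u i))

section Commutator

variable {𝕜 H : Type*} [NontriviallyNormedField 𝕜] [NormedAddCommGroup H] [NormedSpace 𝕜 H]
  (T : H →ₗ.[𝕜] H) (a : H →L[𝕜] H) {E : Submodule 𝕜 H}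

def commutatorOn (hE : ∀ φ ∈ E, φ ∈ T.domain) (haE : ∀ φ ∈ E, a φ ∈ T.domain) : E →ₗ[𝕜] H :=
  T.toFun ∘ₗ (a : H →ₗ[𝕜] H).restrict haE - (a : H →ₗ[𝕜] H) ∘ₗ T.toFun ∘ₗ Submodule.inclusion hE

variable {T a}

theorem IsClosed.apply_mem_domain_of_commutator_bounded [CompleteSpace H] (hT : T.IsClosed)
    (hE : ∀ φ ∈ E, φ ∈ T.domain) (haE : ∀ φ ∈ E, a φ ∈ T.domain) {C : ℝ}
    (hC : ∀ (φ : H) (hφ : φ ∈ E), ‖T ⟨a φ, haE φ hφ⟩ - a (T ⟨φ, hE φ hφ⟩)‖ ≤ C * ‖φ‖)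
    {x : ℕ → E} {ψ : H} (hx : Tendsto (fun n => (x n : H)) atTop (𝓝 ψ))
    (hTx : CauchySeq fun n => T ⟨x n, hE _ (x n).2⟩) : a ψ ∈ T.domain := by
  have hxC : CauchySeq x := isUniformEmbedding_subtype_val.isUniformInducing.cauchy_map_iff.1
    hx.cauchySeq
  have hcomm : CauchySeq (commutatorOn T a hE haE ∘ x) :=
    (AddMonoidHomClass.lipschitz_of_bound (commutatorOn T a hE haE) C fun φ : E => hC φ φ.2)
      |>.cauchySeq_comp hxC
  have hTax : CauchySeq fun n => T ⟨a (x n), haE _ (x n).2⟩ := by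
    convert hcomm.add (a.uniformContinuous.comp_cauchySeq hTx) using 2 with n
    exact (sub_add_cancel _ _).symm
  obtain ⟨ξ, hξ⟩ := cauchySeq_tendsto_of_complete hTax
  exact hT.mem_domain_of_tendsto ((a.continuous.tendsto ψ).comp hx) hξ

end Commutator

end LinearPMap

theorem stmt_11_general {H : Type*} [NormedAddCommGroup H] [InnerProductSpace ℂ H] [CompleteSpace H]
    (D : H →ₗ.[ℂ] H) (hD : D.IsClosed) (hDdense : Dense (D.domain : Set H))
    (E : Submodule ℂ H) (hES : ∀ φ ∈ E, φ ∈ D.domain) (hEA : ∀ φ ∈ E, φ ∈ D.adjoint.domain)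
    (hEdense : ∀ (ψ : H) (hψD : ψ ∈ D.domain) (hψA : ψ ∈ D.adjoint.domain), ∀ ε : ℝ, 0 < ε →
      ∃ (φ : H) (hφ : φ ∈ E),
        ‖ψ - φ‖ ^ 2 + ‖D ⟨ψ - φ, D.domain.sub_mem hψD (hES φ hφ)⟩‖ ^ 2
          + ‖D.adjoint ⟨ψ - φ, D.adjoint.domain.sub_mem hψA (hEA φ hφ)⟩‖ ^ 2 < ε)
    (a : H →L[ℂ] H)
    (haD : ∀ φ ∈ E, a φ ∈ D.domain) (haA : ∀ φ ∈ E, a φ ∈ D.adjoint.domain)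
    (hcommD : ∃ C : ℝ, ∀ (φ : H) (hφ : φ ∈ E),
      ‖D ⟨a φ, haD φ hφ⟩ - a (D ⟨φ, hES φ hφ⟩)‖ ≤ C * ‖φ‖)
    (hcommA : ∃ C : ℝ, ∀ (φ : H) (hφ : φ ∈ E),
      ‖D.adjoint ⟨a φ, haA φ hφ⟩ - a (D.adjoint ⟨φ, hEA φ hφ⟩)‖ ≤ C * ‖φ‖) :
    ∀ ψ : H, ψ ∈ D.domain → ψ ∈ D.adjoint.domain →
      a ψ ∈ D.domain ∧ a ψ ∈ D.adjoint.domain := by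
  intro ψ hψD hψA
  obtain ⟨C₁, hC₁⟩ := hcommD
  obtain ⟨C₂, hC₂⟩ := hcommA
  obtain ⟨x, hx, hDx, hD'x⟩ := exists_seq_tendsto_of_forall_sq_add_sq_add_sq_lt
    (fun φ : E => (φ : H)) (fun φ => D ⟨φ, hES φ φ.2⟩) (fun φ => D.adjoint ⟨φ, hEA φ φ.2⟩)
    ψ (D ⟨ψ, hψD⟩) (D.adjoint ⟨ψ, hψA⟩) fun ε hε => by
      obtain ⟨φ, hφ, hlt⟩ := hEdense ψ hψD hψA ε hε
      exact ⟨⟨φ, hφ⟩, by simp only [← LinearPMap.map_sub]; exact hlt⟩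
  exact ⟨hD.apply_mem_domain_of_commutator_bounded hES haD hC₁ hx hDx.cauchySeq,
    (LinearPMap.adjoint_isClosed hDdense).apply_mem_domain_of_commutator_bounded hEA haA hC₂ hx
      hD'x.cauchySeq⟩

/-- If a bounded operator `a` and its adjoint map a subspace `E` ⊆ `Dom D ∩ Dom D*`,
dense in the combined graph norm, into `Dom D ∩ Dom D*`, with `[D,a]` and `[D*,a]`
bounded on `E`, then `a` preserves all of `Dom D ∩ Dom D*`. -/
theorem stmt_11 {H : Type*} [NormedAddCommGroup H] [InnerProductSpace ℂ H] [CompleteSpace H]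
    (D : H →ₗ.[ℂ] H) (hD : D.IsClosed) (hDdense : Dense (D.domain : Set H))
    (E : Submodule ℂ H) (hES : ∀ φ ∈ E, φ ∈ D.domain) (hEA : ∀ φ ∈ E, φ ∈ D.adjoint.domain)
    (hEdense : ∀ (ψ : H) (hψD : ψ ∈ D.domain) (hψA : ψ ∈ D.adjoint.domain), ∀ ε : ℝ, 0 < ε →
      ∃ (φ : H) (hφ : φ ∈ E),
        ‖ψ - φ‖ ^ 2 + ‖D ⟨ψ - φ, D.domain.sub_mem hψD (hES φ hφ)⟩‖ ^ 2
          + ‖D.adjoint ⟨ψ - φ, D.adjoint.domain.sub_mem hψA (hEA φ hφ)⟩‖ ^ 2 < ε)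
    (a : H →L[ℂ] H)
    (haD : ∀ φ ∈ E, a φ ∈ D.domain) (haA : ∀ φ ∈ E, a φ ∈ D.adjoint.domain)
    (hastD : ∀ φ ∈ E, ContinuousLinearMap.adjoint a φ ∈ D.domain)
    (hastA : ∀ φ ∈ E, ContinuousLinearMap.adjoint a φ ∈ D.adjoint.domain)
    (hcommD : ∃ C : ℝ, ∀ (φ : H) (hφ : φ ∈ E),
      ‖D ⟨a φ, haD φ hφ⟩ - a (D ⟨φ, hES φ hφ⟩)‖ ≤ C * ‖φ‖)
    (hcommA : ∃ C : ℝ, ∀ (φ : H) (hφ : φ ∈ E),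
      ‖D.adjoint ⟨a φ, haA φ hφ⟩ - a (D.adjoint ⟨φ, hEA φ hφ⟩)‖ ≤ C * ‖φ‖) :
    ∀ ψ : H, ψ ∈ D.domain → ψ ∈ D.adjoint.domain →
      a ψ ∈ D.domain ∧ a ψ ∈ D.adjoint.domain :=
  stmt_11_general D hD hDdense E hES hEA hEdense a haD haA hcommD hcommA
end

section
/- Let D be a symmetric densely defined operator on a Hilbert space H such that D² (defined on {ψ ∈ Dom D : Dψ ∈ Dom D}) is essentially self-adjoint. Then D is essentially self-adjoint. -/
/-!
Let `T` be the closure of `D`. Since `D²` is nonnegative and its closure is self-adjoint,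
`Ran (D² + 1)` is dense. On `Dom D²` we have `D² + 1 = (D + c)(D - c)` for `c = ±i`, so the
ranges of `D ± i`, and hence of `T ± i`, are dense. For the closed symmetric operator `T`,
`‖(T ± i) x‖² = ‖T x‖² + ‖x‖²` shows that these ranges are also closed, so `T ± i` is onto.
Finally, for `y ∈ Dom T†` choose `x ∈ Dom T` with `(T - i) x = (T† - i) y`; then `y - x` is
orthogonal to `Ran (T + i)`, so `y = x ∈ Dom T`.
-/

open scoped InnerProductSpace

theorem Submodule.adjoint_topologicalClosure {𝕜 E F : Type*} [RCLike 𝕜] [NormedAddCommGroup E]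
    [InnerProductSpace 𝕜 E] [NormedAddCommGroup F] [InnerProductSpace 𝕜 F]
    (g : Submodule 𝕜 (E × F)) : g.topologicalClosure.adjoint = g.adjoint := by
  ext x
  simp only [Submodule.mem_adjoint_iff]
  refine ⟨fun h a b hab => h a b (g.le_topologicalClosure hab), fun h a b hab => ?_⟩
  have hclosed : IsClosed {p : E × F | ⟪p.2, x.1⟫_𝕜 - ⟪p.1, x.2⟫_𝕜 = 0} :=
    isClosed_eq (by fun_prop) continuous_const
  exact closure_minimal (fun p hp => h p.1 p.2 hp) hclosed hab

theorem LinearMap.denseRange_of_forall_inner_eq_zero {𝕜 E M : Type*} [RCLike 𝕜]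
    [NormedAddCommGroup E] [InnerProductSpace 𝕜 E] [CompleteSpace E] [AddCommGroup M] [Module 𝕜 M]
    (f : M →ₗ[𝕜] E) (h : ∀ v : E, (∀ m, ⟪f m, v⟫_𝕜 = 0) → v = 0) : DenseRange f := by
  rw [DenseRange, ← LinearMap.coe_range, Submodule.dense_iff_topologicalClosure_eq_top,
    Submodule.topologicalClosure_eq_top_iff, Submodule.eq_bot_iff]
  exact fun v hv => h v fun m => (Submodule.mem_orthogonal _ _).mp hv _ ⟨m, rfl⟩

theorem norm_add_smul_sq_of_inner_comm {E : Type*} [NormedAddCommGroup E] [InnerProductSpace ℂ E]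
    {a x : E} (h : ⟪a, x⟫_ℂ = ⟪x, a⟫_ℂ) {c : ℂ} (hc : c.re = 0) :
    ‖a + c • x‖ ^ 2 = ‖a‖ ^ 2 + ‖c‖ ^ 2 * ‖x‖ ^ 2 := by
  have him : (⟪a, x⟫_ℂ).im = 0 := Complex.conj_eq_iff_im.mp ((inner_conj_symm x a).trans h.symm)
  rw [@norm_add_sq ℂ, inner_smul_right, norm_smul, mul_pow]
  simp [hc, him]

namespace LinearPMap

section Topological

variable {R E F : Type*} [CommRing R] [AddCommGroup E] [AddCommGroup F] [Module R E] [Module R F]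
  [TopologicalSpace E] [TopologicalSpace F] [ContinuousAdd E] [ContinuousAdd F]
  [TopologicalSpace R] [ContinuousSMul R E] [ContinuousSMul R F]

theorem graph_closure_subset_closure_graph (T : E →ₗ.[R] F) :
    (T.closure.graph : Set (E × F)) ⊆ _root_.closure T.graph := by
  by_cases hT : T.IsClosable
  · rw [← hT.graph_closure_eq_closure_graph, Submodule.topologicalClosure_coe]
  · rw [T.closure_def' hT]
    exact subset_closure

theorem domain_closure_subset_closure_domain (T : E →ₗ.[R] F) :
    (T.closure.domain : Set E) ⊆ _root_.closure T.domain := fun x hx =>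
  map_mem_closure continuous_fst
    (T.graph_closure_subset_closure_graph (T.closure.mem_graph ⟨x, hx⟩))
    fun p hp => by
      obtain ⟨y, hy, -⟩ := T.mem_graph_iff.mp hp
      exact hy ▸ y.2

theorem closure_le_of_le_of_isClosed {T S : E →ₗ.[R] F} (hS : S.IsClosed) (h : T ≤ S) :
    T.closure ≤ S :=
  le_of_le_graph <| (T.graph_closure_subset_closure_graph).trans <|
    closure_minimal (le_graph_of_le h) hS

end Topological

section InnerProduct

variable {𝕜 E F : Type*} [RCLike 𝕜] [NormedAddCommGroup E] [InnerProductSpace 𝕜 E]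
  [CompleteSpace E] [NormedAddCommGroup F] [InnerProductSpace 𝕜 F] {T : E →ₗ.[𝕜] F}

theorem adjoint_closure (hT : Dense (T.domain : Set E)) (hc : T.IsClosable) :
    T.closure† = T† := by
  apply eq_of_eq_graph
  rw [adjoint_graph_eq_graph_adjoint (hT.mono T.le_closure.1), adjoint_graph_eq_graph_adjoint hT,
    ← hc.graph_closure_eq_closure_graph, Submodule.adjoint_topologicalClosure]

theorem IsFormalAdjoint.isClosable {S : F →ₗ.[𝕜] E} (hT : Dense (T.domain : Set E))
    (h : T.IsFormalAdjoint S) : S.IsClosable :=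
  isClosable_iff_exists_closed_extension.mpr ⟨T†, adjoint_isClosed hT, h.le_adjoint hT⟩

end InnerProduct

section SelfMap

variable {𝕜 E : Type*} [RCLike 𝕜] [NormedAddCommGroup E] [InnerProductSpace 𝕜 E] [CompleteSpace E]
  {T : E →ₗ.[𝕜] E}

theorem isFormalAdjoint_self_of_le_adjoint (hT : Dense (T.domain : Set E)) (h : T ≤ T†) :
    T.IsFormalAdjoint T := fun x y => by
  rw [apply_comp_inclusion h x]
  exact adjoint_isFormalAdjoint hT _ y

theorem IsFormalAdjoint.closure (hT : Dense (T.domain : Set E)) (h : T.IsFormalAdjoint T) :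
    T.closure.IsFormalAdjoint T.closure := by
  have hle : T.closure ≤ T.closure† := by
    rw [adjoint_closure hT (h.isClosable hT)]
    exact closure_le_of_le_of_isClosed (adjoint_isClosed hT) (h.le_adjoint hT)
  exact isFormalAdjoint_self_of_le_adjoint (hT.mono T.le_closure.1) hle

theorem denseRange_add_self_of_isSelfAdjoint_closure {A : E →ₗ.[𝕜] E} (hA : IsSelfAdjoint A.closure)
    (hpos : ∀ x : A.domain, 0 ≤ RCLike.re ⟪(x : E), A x⟫_𝕜) :
    DenseRange fun x : A.domain => A x + (x : E) := by
  have hclosable : A.IsClosable :=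
    isClosable_iff_exists_closed_extension.mpr ⟨_, hA.isClosed, A.le_closure⟩
  have hdense : Dense (A.domain : Set E) :=
    dense_closure.mp (hA.dense_domain.mono A.domain_closure_subset_closure_domain)
  have hadj : A† = A.closure := (adjoint_closure hdense hclosable).symm.trans hA
  refine (A.toFun + A.domain.subtype).denseRange_of_forall_inner_eq_zero fun v hv => ?_
  have hgraph : (v, -v) ∈ A.closure.graph := by
    rw [← hadj, adjoint_graph_eq_graph_adjoint hdense, Submodule.mem_adjoint_iff]
    intro a b hab
    obtain ⟨x, rfl, rfl⟩ := A.mem_graph_iff.mp hab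
    simpa [inner_neg_right, ← inner_add_left] using hv x
  have hclosed : _root_.IsClosed {p : E × E | 0 ≤ RCLike.re ⟪p.1, p.2⟫_𝕜} :=
    isClosed_le continuous_const (by fun_prop)
  have hnonneg : 0 ≤ RCLike.re ⟪v, -v⟫_𝕜 := by
    refine closure_minimal (fun ⟨a, b⟩ hp => ?_) hclosed
      (A.graph_closure_subset_closure_graph hgraph)
    obtain ⟨x, rfl, rfl⟩ := A.mem_graph_iff.mp hp
    exact hpos x
  simpa using hnonneg

end SelfMap

section Complex

open Complex

variable {H : Type*} [NormedAddCommGroup H] [InnerProductSpace ℂ H] {T : H →ₗ.[ℂ] H}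

theorem denseRange_add_smul_of_le {S : H →ₗ.[ℂ] H} (h : S ≤ T) {c : ℂ}
    (hS : DenseRange fun x : S.domain => S x + c • (x : H)) :
    DenseRange fun x : T.domain => T x + c • (x : H) := by
  refine Dense.mono ?_ hS
  rintro _ ⟨x, rfl⟩
  exact ⟨Submodule.inclusion h.1 x, by simp only [← apply_comp_inclusion h]; rfl⟩

theorem denseRange_add_smul_of_denseRange_sq {D A : H →ₗ.[ℂ] H}
    (hA : ∀ x : A.domain, ∃ (h : (x : H) ∈ D.domain) (h' : D ⟨x, h⟩ ∈ D.domain),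
      A x = D ⟨D ⟨x, h⟩, h'⟩)
    (hdense : DenseRange fun x : A.domain => A x + (x : H)) {c : ℂ} (hc : c ^ 2 = -1) :
    DenseRange fun x : D.domain => D x + c • (x : H) := by
  refine Dense.mono ?_ hdense
  rintro _ ⟨x, rfl⟩
  obtain ⟨h, h', hx⟩ := hA x
  refine ⟨⟨D ⟨x, h⟩, h'⟩ - c • ⟨x, h⟩, ?_⟩
  simp only [map_sub, map_smul, Submodule.coe_sub, Submodule.coe_smul, hx]
  linear_combination (norm := module) -hc • (x : H)

theorem IsFormalAdjoint.isClosed_range_add_smul [CompleteSpace H] (hTc : T.IsClosed)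
    (h : T.IsFormalAdjoint T) {c : ℂ} (hre : c.re = 0) (hnorm : ‖c‖ = 1) :
    _root_.IsClosed (Set.range fun x : T.domain => T x + c • (x : H)) := by
  have : CompleteSpace T.graph := hTc.completeSpace_coe
  let f : T.graph →L[ℂ] H :=
    (ContinuousLinearMap.snd ℂ H H + c • ContinuousLinearMap.fst ℂ H H).comp T.graph.subtypeL
  have hrange : Set.range f = Set.range fun x : T.domain => T x + c • (x : H) := by
    ext y
    constructor
    · rintro ⟨⟨p, hp⟩, rfl⟩
      obtain ⟨x, hx1, hx2⟩ := T.mem_graph_iff.mp hp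
      exact ⟨x, by simp [f, hx1, hx2]⟩
    · rintro ⟨x, rfl⟩
      exact ⟨⟨_, T.mem_graph x⟩, by simp [f]⟩
  have hbound : ∀ p : T.graph, ‖p‖ ≤ (1 : NNReal) * ‖f p‖ := by
    rintro ⟨p, hp⟩
    obtain ⟨x, hx1, hx2⟩ := T.mem_graph_iff.mp hp
    have hid := norm_add_smul_sq_of_inner_comm (h x x) hre
    rw [hnorm, hx1, hx2] at hid
    rw [NNReal.coe_one, one_mul, Submodule.coe_norm, Prod.norm_def, max_le_iff]
    simp only [f, ContinuousLinearMap.comp_apply, Submodule.subtypeL_apply,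
      _root_.add_apply, _root_.smul_apply,
      ContinuousLinearMap.coe_snd', ContinuousLinearMap.coe_fst']
    constructor <;> nlinarith [norm_nonneg p.1, norm_nonneg p.2, norm_nonneg (p.2 + c • p.1)]
  rw [← hrange]
  exact (f.antilipschitz_of_bound hbound).isClosed_range f.uniformContinuous

theorem IsFormalAdjoint.isSelfAdjoint_of_denseRange [CompleteSpace H]
    (hT : Dense (T.domain : Set H)) (hTc : T.IsClosed) (h : T.IsFormalAdjoint T)
    (hplus : DenseRange fun x : T.domain => T x + I • (x : H))
    (hminus : DenseRange fun x : T.domain => T x + (-I) • (x : H)) : IsSelfAdjoint T := by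
  have hle : T ≤ T† := h.le_adjoint hT
  have hsurj : Set.range (fun x : T.domain => T x + (-I) • (x : H)) = Set.univ := by
    rw [← (h.isClosed_range_add_smul hTc (by simp) (by simp)).closure_eq, hminus.closure_eq]
  refine (eq_of_le_of_domain_eq hle (le_antisymm hle.1 fun y hy => ?_)).symm
  obtain ⟨x, hx⟩ := hsurj.symm ▸ Set.mem_univ (T† ⟨y, hy⟩ + (-I) • y)
  have hxy : (x : H) = y := hplus.eq_of_inner_left ℂ fun z => by
    have hTx : T x = T† ⟨y, hy⟩ + (-I) • y - (-I) • (x : H) := eq_sub_of_add_eq hx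
    rw [inner_add_right, inner_add_right, ← h x z, ← adjoint_isFormalAdjoint hT ⟨y, hy⟩ z, hTx]
    simp only [inner_sub_left, inner_add_left, inner_smul_left, inner_smul_right]
    simp
  exact hxy ▸ x.2

end Complex

end LinearPMap

/-- If `D` is a densely defined symmetric operator whose square `D²` (on
`{ψ ∈ Dom D : Dψ ∈ Dom D}`) is essentially self-adjoint, then `D` is essentially
self-adjoint. -/
theorem stmt_17 {H : Type*} [NormedAddCommGroup H] [InnerProductSpace ℂ H] [CompleteSpace H]
    (D : H →ₗ.[ℂ] H) (hDdense : Dense (D.domain : Set H))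
    (hsym : ∀ x y : D.domain, (inner ℂ (D x) (y : H) : ℂ) = inner ℂ (x : H) (D y))
    (D2 : H →ₗ.[ℂ] H)
    (hD2dom : ∀ x : H, x ∈ D2.domain ↔ ∃ h : x ∈ D.domain, D ⟨x, h⟩ ∈ D.domain)
    (hD2val : ∀ (x : H) (h : x ∈ D.domain) (h' : D ⟨x, h⟩ ∈ D.domain) (hx : x ∈ D2.domain),
      D2 ⟨x, hx⟩ = D ⟨D ⟨x, h⟩, h'⟩)
    (hD2 : IsSelfAdjoint D2.closure) :
    IsSelfAdjoint D.closure := by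
  have hDsym : D.IsFormalAdjoint D := hsym
  have hsq : ∀ x : D2.domain, ∃ (h : (x : H) ∈ D.domain) (h' : D ⟨x, h⟩ ∈ D.domain),
      D2 x = D ⟨D ⟨x, h⟩, h'⟩ := fun x =>
    let ⟨h, h'⟩ := (hD2dom x).mp x.2
    ⟨h, h', hD2val x h h' x.2⟩
  have hpos : ∀ x : D2.domain, 0 ≤ RCLike.re ⟪(x : H), D2 x⟫_ℂ := fun x => by
    obtain ⟨h, h', hx⟩ := hsq x
    rw [hx, ← hsym ⟨x, h⟩ ⟨_, h'⟩]
    exact inner_self_nonneg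
  have hran : ∀ c : ℂ, c ^ 2 = -1 →
      DenseRange fun x : D.closure.domain => D.closure x + c • (x : H) := fun c hc =>
    LinearPMap.denseRange_add_smul_of_le D.le_closure <|
      LinearPMap.denseRange_add_smul_of_denseRange_sq hsq
        (LinearPMap.denseRange_add_self_of_isSelfAdjoint_closure hD2 hpos) hc
  exact (hDsym.closure hDdense).isSelfAdjoint_of_denseRange (hDdense.mono D.le_closure.1)
    (hDsym.isClosable hDdense).closure_isClosed (hran Complex.I Complex.I_sq)
    (hran (-Complex.I) (by rw [neg_sq, Complex.I_sq]))
end
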